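/- For every n ≥ 1 and any two vertices x, y of the n-dimensional hypercube Q_n with opposite parities (i.e., the Hamming distance d(x,y) is odd), there exists a Hamiltonian path in Q_n joining x and y. -/

import Mathlib

open SimpleGraph Finset

/-- The n-dimensional hypercube: vertices are 0/1 vectors, adjacent iff
Hamming distance is 1. -/
def cube (n : ℕ) : SimpleGraph (Fin n → ZMod 2) where
  Adj x y := hammingDist x y = 1
  symm := by constructor; intro x y h; rwa [hammingDist_comm]
  loopless := by constructor; intro x h; simp [hammingDist_self] at h

/-- Parity of a vertex: sum of coordinates mod 2. -/
def parity {n : ℕ} (u : Fin n → ZMod 2) : ZMod 2 := ∑ i, u i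

/-!
Induct on `n`. Split `Q_{n+1}` along a coordinate `i` in which `x` and `y` differ into two
copies of `Q_n`. Deleting coordinate `i` leaves `x'` and `y'` of equal parity, so for any `u` of
the other parity the induction hypothesis gives Hamiltonian paths `x' → u` in the layer of `x` and
`u → y'` in the layer of `y`; joining them by the edge between the two copies of `u` visits every
vertex once.
-/

lemma hammingDist_insertNth {β : Type*} [DecidableEq β] {n : ℕ} (i : Fin (n + 1)) (a b : β)
    (x y : Fin n → β) :
    hammingDist (Fin.insertNth i a x : Fin (n + 1) → β) (Fin.insertNth i b y) =
      (if a = b then 0 else 1) + hammingDist x y := by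
  simp only [hammingDist, card_filter, Fin.sum_univ_succAbove _ i, Fin.insertNth_apply_same,
    Fin.insertNth_apply_succAbove, ne_eq, ite_not]

lemma natCast_hammingDist {n : ℕ} (x y : Fin n → ZMod 2) :
    (hammingDist x y : ZMod 2) = parity x + parity y := by
  rw [hammingDist, natCast_card_filter, parity, parity, ← sum_add_distrib]
  refine sum_congr rfl fun i _ => ?_
  generalize x i = a, y i = b
  revert a b
  decide

lemma odd_hammingDist_iff {n : ℕ} {x y : Fin n → ZMod 2} :
    Odd (hammingDist x y) ↔ parity x ≠ parity y := by
  rw [← ZMod.natCast_eq_one_iff_odd, natCast_hammingDist]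
  generalize parity x = p, parity y = q
  revert p q
  decide

lemma parity_insertNth {n : ℕ} (i : Fin (n + 1)) (a : ZMod 2) (x : Fin n → ZMod 2) :
    parity (Fin.insertNth i a x) = a + parity x :=
  Fin.sum_insertNth i a x

lemma exists_parity_eq {n : ℕ} (p : ZMod 2) : ∃ u : Fin (n + 1) → ZMod 2, parity u = p :=
  ⟨Fin.cons p 0, by simp [parity, Fin.sum_univ_succ]⟩

def cubeLayer {n : ℕ} (i : Fin (n + 1)) (a : ZMod 2) : cube n ↪g cube (n + 1) where
  toFun x := (Fin.insertNth i a x : Fin (n + 1) → ZMod 2)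
  inj' := Fin.insertNth_right_injective (α := fun _ => ZMod 2) a
  map_rel_iff' {x y} := by
    change hammingDist (Fin.insertNth i a x : Fin (n + 1) → ZMod 2) (Fin.insertNth i a y) = 1 ↔
      hammingDist x y = 1
    simp [hammingDist_insertNth]

lemma coe_cubeLayer {n : ℕ} (i : Fin (n + 1)) (a : ZMod 2) :
    ⇑(cubeLayer i a) = Fin.insertNth (α := fun _ => ZMod 2) i a := rfl

lemma cubeLayer_toHom_apply {n : ℕ} (i : Fin (n + 1)) (a : ZMod 2) (x : Fin n → ZMod 2) :
    (cubeLayer i a).toHom x = Fin.insertNth i a x := rfl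

lemma List.count_map_insertNth {β : Type*} [DecidableEq β] {n : ℕ} (i : Fin (n + 1))
    (a c : β) (z : Fin n → β) (l : List (Fin n → β)) :
    (l.map (Fin.insertNth i a)).count (Fin.insertNth i c z : Fin (n + 1) → β) =
      if c = a then l.count z else 0 := by
  split_ifs with h
  · subst h
    exact l.count_map_of_injective _ (Fin.insertNth_right_injective (α := fun _ => β) c) z
  · simp [List.count_eq_zero, Fin.insertNth_inj, Ne.symm h]

lemma exists_isHamiltonian_insertNth {n : ℕ} (i : Fin (n + 1)) {a b : ZMod 2} (hab : a ≠ b)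
    {x u y : Fin n → ZMod 2} {p : (cube n).Walk x u} {q : (cube n).Walk u y}
    (hp : p.IsHamiltonian) (hq : q.IsHamiltonian) :
    ∃ w : (cube (n + 1)).Walk (Fin.insertNth i a x) (Fin.insertNth i b y), w.IsHamiltonian := by
  have rung : (cube (n + 1)).Adj (cubeLayer i a u) (cubeLayer i b u) := by
    change hammingDist (Fin.insertNth i a u : Fin (n + 1) → ZMod 2) (Fin.insertNth i b u) = 1
    simp [hammingDist_insertNth, hab]
  let w := (p.map (cubeLayer i a).toHom).append (.cons rung (q.map (cubeLayer i b).toHom))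
  have hw : w.support = p.support.map (cubeLayer i a) ++ q.support.map (cubeLayer i b) := by
    simp only [w, Walk.support_append, Walk.support_cons, List.tail_cons, Walk.support_map]
    rfl
  refine ⟨w.copy (cubeLayer_toHom_apply i a x) (cubeLayer_toHom_apply i b y), fun v => ?_⟩
  obtain ⟨c, z, rfl⟩ : ∃ c z, v = Fin.insertNth i c z :=
    ⟨_, _, (Fin.insertNth_self_removeNth i v).symm⟩
  have hc : c = a ∨ c = b := by
    have key : ∀ a b c : ZMod 2, a ≠ b → c = a ∨ c = b := by decide
    exact key a b c hab
  rw [Walk.support_copy, hw, List.count_append, coe_cubeLayer, coe_cubeLayer,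
    List.count_map_insertNth, List.count_map_insertNth]
  rcases hc with rfl | rfl <;> simp [hab, hab.symm, hp z, hq z]

theorem exists_isHamiltonian_of_parity_ne (n : ℕ) (x y : Fin n → ZMod 2)
    (hxy : parity x ≠ parity y) : ∃ w : (cube n).Walk x y, w.IsHamiltonian := by
  induction n with
  | zero => simp [parity] at hxy
  | succ n ih =>
    obtain ⟨i, hi⟩ : ∃ i, x i ≠ y i := Function.ne_iff.mp (by rintro rfl; exact hxy rfl)
    set x' := Fin.removeNth i x
    set y' := Fin.removeNth i y
    have hx'y' : parity x' = parity y' := by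
      rw [← Fin.insertNth_self_removeNth i x, ← Fin.insertNth_self_removeNth i y,
        parity_insertNth, parity_insertNth] at hxy
      revert hi hxy; generalize x i = a, y i = b, parity x' = p, parity y' = q
      revert a b p q; decide
    obtain ⟨u, ⟨p, hp⟩, ⟨q, hq⟩⟩ : ∃ u, (∃ p : (cube n).Walk x' u, p.IsHamiltonian) ∧
        ∃ q : (cube n).Walk u y', q.IsHamiltonian := by
      cases n with
      | zero =>
        exact ⟨x', ⟨.nil, .of_subsingleton⟩,
          ⟨Walk.nil.copy rfl (Subsingleton.elim _ _), .of_subsingleton⟩⟩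
      | succ m =>
        obtain ⟨u, hu⟩ := exists_parity_eq (n := m) (parity x' + 1)
        exact ⟨u, ih _ _ (by simp [hu]), ih _ _ (by simp [hu, ← hx'y'])⟩
    rw [← Fin.insertNth_self_removeNth i x, ← Fin.insertNth_self_removeNth i y]
    exact exists_isHamiltonian_insertNth i hi hp hq

theorem stmt0_general (n : ℕ) (x y : Fin n → ZMod 2)
    (hp : Odd (hammingDist x y)) :
    ∃ w : (cube n).Walk x y, w.IsHamiltonian :=
  exists_isHamiltonian_of_parity_ne n x y (odd_hammingDist_iff.mp hp)

theorem stmt0 (n : ℕ) (hn : 1 ≤ n) (x y : Fin n → ZMod 2)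
    (hp : Odd (hammingDist x y)) :
    ∃ w : (cube n).Walk x y, w.IsHamiltonian :=
  stmt0_general n x y hp
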